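/- Let N > 0 and η > 0 be real numbers, and define R(ρ) = N · log(1 + 10^(ρ/10)/η) for ρ ∈ ℝ. Then the fourth derivative of R is strictly negative at ρ_int = 10·log(η)/log(10); i.e., R''''(ρ_int) < 0. -/

import Mathlib

/-!
With `c = log 10 / 10` we have `R ρ = N · softplus (c ρ - log η)`, where
`softplus t = log (1 + eᵗ)`, and the intercept is exactly the point where `c ρ - log η = 0`.
Hence `R⁗(ρ_int) = N c⁴ · softplus⁗(0)`. Since `softplus' = σ` is the sigmoid and `σ' = σ (1 - σ)`,
`softplus⁗ = σ (1 - σ) (1 - 6σ + 6σ²)`, which at `σ(0) = 1/2` equals `-1/8`.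
-/

open Real

noncomputable def softplus (t : ℝ) : ℝ := log (1 + exp t)

lemma contDiff_softplus {n : WithTop ℕ∞} : ContDiff ℝ n softplus :=
  (contDiff_const.add contDiff_exp).log fun t => by positivity

lemma hasDerivAt_softplus (t : ℝ) : HasDerivAt softplus (sigmoid t) t := by
  refine (((hasDerivAt_exp t).const_add 1).log (by positivity)).congr_deriv ?_
  rw [sigmoid_def, exp_neg]
  field

lemma deriv_softplus : deriv softplus = sigmoid :=
  funext fun t => (hasDerivAt_softplus t).deriv

lemma iteratedDeriv_two_sigmoid :
    iteratedDeriv 2 sigmoid = fun t => sigmoid t * (1 - sigmoid t) * (1 - 2 * sigmoid t) := by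
  funext t
  have h := hasDerivAt_sigmoid t
  rw [iteratedDeriv_succ, iteratedDeriv_one, deriv_sigmoid, (h.fun_mul (h.const_sub 1)).deriv]
  ring

lemma iteratedDeriv_three_sigmoid (t : ℝ) :
    iteratedDeriv 3 sigmoid t =
      sigmoid t * (1 - sigmoid t) * (1 - 6 * sigmoid t + 6 * sigmoid t ^ 2) := by
  have h := hasDerivAt_sigmoid t
  have h₂ := (h.fun_mul (h.const_sub 1)).fun_mul ((h.const_mul 2).const_sub 1)
  rw [iteratedDeriv_succ, iteratedDeriv_two_sigmoid, h₂.deriv]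
  ring

lemma iteratedDeriv_four_softplus_zero : iteratedDeriv 4 softplus 0 = -1 / 8 := by
  rw [iteratedDeriv_succ', deriv_softplus, iteratedDeriv_three_sigmoid, sigmoid_zero]
  norm_num

lemma iteratedDeriv_comp_mul_sub {n : ℕ} {f : ℝ → ℝ} (hf : ContDiff ℝ n f) (a b x : ℝ) :
    iteratedDeriv n (fun x => f (a * x - b)) x = a ^ n * iteratedDeriv n f (a * x - b) := by
  have hshift : ContDiff ℝ n fun y => f (y - b) := hf.comp (contDiff_id.sub contDiff_const)
  rw [iteratedDeriv_comp_const_mul hshift a, iteratedDeriv_comp_sub_const]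

/-- The fourth derivative of the sum-rate `R(ρ) = N·log(1 + 10^(ρ/10)/η)` is strictly
negative at the intercept `ρ_int = 10·log η / log 10`. -/
theorem fourth_deriv_neg_at_intercept (N η : ℝ) (hN : 0 < N) (hη : 0 < η)
    (R : ℝ → ℝ) (hR : ∀ ρ : ℝ, R ρ = N * Real.log (1 + (10 : ℝ) ^ (ρ / 10) / η)) :
    iteratedDeriv 4 R (10 * Real.log η / Real.log 10) < 0 := by
  set c := Real.log 10 / 10
  have hR_softplus : R = fun ρ => N * softplus (c * ρ - log η) := by
    funext ρ
    rw [hR, softplus, exp_sub, exp_log hη, rpow_def_of_pos (by norm_num)]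
    congr 5
    ring
  have hintercept : c * (10 * log η / log 10) - log η = 0 := by
    field_simp [c]
    ring
  rw [hR_softplus, iteratedDeriv_const_mul_field,
    iteratedDeriv_comp_mul_sub contDiff_softplus, hintercept, iteratedDeriv_four_softplus_zero]
  have hNc : 0 < N * c ^ 4 := by positivity
  linarith
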